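/- arXiv:1502.02606 — 7 statements merged into one kernel-verified Lean document; each statement's English description precedes it below -/
import Mathlib

section
/- The Lovász extension f⁻ of a submodular function f satisfies f⁻(c·x) ≥ c·f⁻(x) for every x ∈ [0,1]^V and every constant c ∈ [0,1]. -/
open MeasureTheory Finset

/-- A set function is submodular. -/
def Submodular {V : Type*} [DecidableEq V] (f : Finset V → ℝ) : Prop :=
  ∀ A B : Finset V, f (A ∪ B) + f (A ∩ B) ≤ f A + f B

/-- The Lovász extension: expectation over a uniform threshold θ ∈ (0,1). -/
noncomputable def lovasz {V : Type*} [Fintype V] [DecidableEq V]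
    (f : Finset V → ℝ) (x : V → ℝ) : ℝ :=
  ∫ θ in Set.Ioo (0:ℝ) 1, f (Finset.univ.filter (fun i => θ ≤ x i))

/-- Characteristic vector of a finite set. -/
def charVec {V : Type*} [DecidableEq V] (S : Finset V) : V → ℝ :=
  fun i => if i ∈ S then 1 else 0

/-!
The superlevel set of `c • x` at height `c θ` is the superlevel set of `x` at height `θ`, so the
substitution `θ ↦ c θ` turns `c · f⁻(x)` into the integral of `f` over the superlevel sets of
`c • x` with thresholds in `(0, c)`. As `f ≥ 0`, enlarging the range of thresholds to `(0, 1)`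
can only increase this integral, and then it is `f⁻(c • x)`.
-/

section SuperlevelSet

variable {V : Type*} [Fintype V]

noncomputable def superlevelSet (x : V → ℝ) (θ : ℝ) : Finset V :=
  univ.filter (fun i => θ ≤ x i)

theorem superlevelSet_smul {c : ℝ} (hc : 0 < c) (x : V → ℝ) (θ : ℝ) :
    superlevelSet (c • x) (c * θ) = superlevelSet x θ := by
  ext i
  simp [superlevelSet, mul_le_mul_iff_right₀ hc]

theorem measurable_superlevelSet (x : V → ℝ) : Measurable[_, ⊤] (superlevelSet x) := by
  let : MeasurableSpace (Finset V) := ⊤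
  refine measurable_to_countable' fun S => ?_
  have hpre : superlevelSet x ⁻¹' {S} = {θ | ∀ i, θ ≤ x i ↔ i ∈ S} := by
    ext θ
    simp [superlevelSet, Finset.ext_iff]
  rw [hpre]
  exact Measurable.setOf <| .forall fun i => measurableSet_Iic.mem.iff measurable_const

variable {E : Type*} [NormedAddCommGroup E]

theorem integrable_comp_superlevelSet (g : Finset V → E) (x : V → ℝ) (μ : Measure ℝ)
    [IsFiniteMeasure μ] : Integrable (fun θ => g (superlevelSet x θ)) μ := by
  let : MeasurableSpace (Finset V) := ⊤
  have hmeas : StronglyMeasurable fun θ => g (superlevelSet x θ) :=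
    StronglyMeasurable.of_discrete.comp_measurable (measurable_superlevelSet x)
  refine .of_bound hmeas.aestronglyMeasurable (∑ S, ‖g S‖) (.of_forall fun θ => ?_)
  exact single_le_sum (f := fun S => ‖g S‖) (fun _ _ => norm_nonneg _) (mem_univ _)

theorem intervalIntegrable_comp_superlevelSet (g : Finset V → E) (x : V → ℝ) (a b : ℝ) :
    IntervalIntegrable (fun θ => g (superlevelSet x θ)) volume a b :=
  ⟨integrable_comp_superlevelSet g x _, integrable_comp_superlevelSet g x _⟩

theorem lovasz_eq_intervalIntegral [DecidableEq V] (f : Finset V → ℝ) (x : V → ℝ) :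
    lovasz f x = ∫ θ in (0:ℝ)..1, f (superlevelSet x θ) := by
  rw [intervalIntegral.integral_of_le zero_le_one, integral_Ioc_eq_integral_Ioo]
  rfl

end SuperlevelSet

theorem lovasz_smul_le_general {V : Type*} [Fintype V] [DecidableEq V]
    (f : Finset V → ℝ) (hnn : ∀ A : Finset V, 0 ≤ f A)
    (x : V → ℝ)
    (c : ℝ) (hc : c ∈ Set.Icc (0:ℝ) 1) :
    c * lovasz f x ≤ lovasz f (c • x) := by
  obtain ⟨hc0, hc1⟩ := hc
  rcases hc0.eq_or_lt with rfl | hc0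
  · simpa [lovasz_eq_intervalIntegral] using
      intervalIntegral.integral_nonneg zero_le_one fun θ _ => hnn _
  calc c * lovasz f x = c * ∫ θ in (0:ℝ)..1, f (superlevelSet (c • x) (c * θ)) := by
        simp only [lovasz_eq_intervalIntegral, superlevelSet_smul hc0]
    _ = ∫ θ in (0:ℝ)..c, f (superlevelSet (c • x) θ) := by
        rw [intervalIntegral.mul_integral_comp_mul_left
          (f := fun θ => f (superlevelSet (c • x) θ)), mul_zero, mul_one]
    _ ≤ lovasz f (c • x) := by
        rw [lovasz_eq_intervalIntegral]
        exact intervalIntegral.integral_mono_interval le_rfl hc0.le hc1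
          (.of_forall fun θ => hnn _) (intervalIntegrable_comp_superlevelSet f _ 0 1)

/-- The Lovász extension satisfies `f⁻(c • x) ≥ c * f⁻(x)` for `c ∈ [0,1]`. -/
theorem lovasz_smul_le {V : Type*} [Fintype V] [DecidableEq V]
    (f : Finset V → ℝ) (hf : Submodular f) (hnn : ∀ A : Finset V, 0 ≤ f A)
    (x : V → ℝ) (hx : ∀ i, x i ∈ Set.Icc (0:ℝ) 1)
    (c : ℝ) (hc : c ∈ Set.Icc (0:ℝ) 1) :
    c * lovasz f x ≤ lovasz f (c • x) :=
  lovasz_smul_le_general f hnn x c hc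
end

section
/- The Lovász extension f⁻ of a submodular function f is convex on [0,1]^V. -/
/-!
For an ordering `L` of `V`, Edmonds' greedy functional `greedyForm f L ∅` assigns to each element
its marginal gain along `L`. Evaluated at the indicator vector of a set `S`, the affine map
`f ∅ + greedyForm f L ∅` telescopes to `f S` when `S` is an initial segment of `L`, and is at
most `f S` for every `S` by submodularity (diminishing returns). Since the level-set indicators
of `x` average to `x`, integrating over the threshold shows that the Lovász extension dominates
each of these affine maps and agrees with the one for an ordering that sorts `x` decreasingly.
So it is a pointwise maximum of finitely many affine functions, hence convex.
-/

open MeasureTheory Finset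

namespace Submodular

variable {V : Type*} [DecidableEq V] {f : Finset V → ℝ}

theorem insert_sub_le_insert_sub_of_subset (hf : Submodular f) {T P : Finset V} {i : V}
    (hTP : T ⊆ P) (hiP : i ∉ P) : f (insert i P) - f P ≤ f (insert i T) - f T := by
  have h := hf P (insert i T)
  rw [Finset.union_insert, Finset.union_eq_left.mpr hTP, Finset.inter_insert_of_notMem hiP,
    Finset.inter_eq_right.mpr hTP] at h
  linarith

end Submodular

section Greedy

variable {V : Type*} [DecidableEq V] (f : Finset V → ℝ)

/-- Edmonds' greedy functional: the coefficient of `x i` is the marginal gain of `i` on top of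
`P` and the elements listed before `i` in `L`. -/
noncomputable def greedyForm : List V → Finset V → (V → ℝ) →ₗ[ℝ] ℝ
  | [], _ => 0
  | i :: L, P => (f (insert i P) - f P) • LinearMap.proj i + greedyForm L (insert i P)

variable {f}

theorem greedyForm_cons_apply (i : V) (L : List V) (P : Finset V) (x : V → ℝ) :
    greedyForm f (i :: L) P x = (f (insert i P) - f P) * x i + greedyForm f L (insert i P) x :=
  rfl

theorem greedyForm_apply_eq_zero {L : List V} {x : V → ℝ} (hx : ∀ i ∈ L, x i = 0)
    (P : Finset V) : greedyForm f L P x = 0 := by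
  induction L generalizing P with
  | nil => rfl
  | cons i L ih =>
    rw [greedyForm_cons_apply, hx i List.mem_cons_self,
      ih fun j hj => hx j (List.mem_cons_of_mem i hj)]
    ring

theorem add_greedyForm_charVec {S : Finset V} {L : List V}
    (hL : L.Pairwise fun a b => b ∈ S → a ∈ S) (P : Finset V) :
    f P + greedyForm f L P (charVec S) = f (P ∪ L.toFinset ∩ S) := by
  induction L generalizing P with
  | nil => simp [greedyForm]
  | cons i L ih =>
    rw [greedyForm_cons_apply, List.toFinset_cons]
    by_cases hi : i ∈ S
    · rw [charVec, if_pos hi, Finset.insert_inter_of_mem hi, Finset.union_insert,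
        ← Finset.insert_union, ← ih hL.of_cons]
      ring
    · have hLS : ∀ j ∈ L, j ∉ S := fun j hj hjS => hi (List.rel_of_pairwise_cons hL hj hjS)
      rw [charVec, if_neg hi,
        greedyForm_apply_eq_zero (x := charVec S) (fun j hj => if_neg (hLS j hj)),
        Finset.insert_inter_of_notMem hi,
        Finset.disjoint_iff_inter_eq_empty.mp
          (Finset.disjoint_left.mpr fun j hj => hLS j (List.mem_toFinset.mp hj))]
      simp

theorem Submodular.add_greedyForm_charVec_le (hf : Submodular f) {L : List V} (hL : L.Nodup)
    {T P : Finset V} (hTP : T ⊆ P) (hLP : ∀ i ∈ L, i ∉ P) (S : Finset V) :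
    f T + greedyForm f L P (charVec S) ≤ f (T ∪ L.toFinset ∩ S) := by
  induction L generalizing T P with
  | nil => simp [greedyForm]
  | cons i L ih =>
    have hiP : i ∉ P := hLP i List.mem_cons_self
    have hLiP : ∀ j ∈ L, j ∉ insert i P := fun j hj hjiP =>
      (Finset.mem_insert.mp hjiP).elim (fun hji => (List.nodup_cons.mp hL).1 (hji ▸ hj))
        (hLP j (List.mem_cons_of_mem i hj))
    rw [greedyForm_cons_apply, List.toFinset_cons, charVec]
    by_cases hi : i ∈ S
    · have hgain := hf.insert_sub_le_insert_sub_of_subset hTP hiP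
      have hrest := ih hL.of_cons (Finset.insert_subset_insert i hTP) hLiP
      rw [Finset.insert_inter_of_mem hi, Finset.union_insert, ← Finset.insert_union, if_pos hi]
      linarith
    · have hrest := ih hL.of_cons (hTP.trans (Finset.subset_insert i P)) hLiP
      rw [Finset.insert_inter_of_notMem hi, if_neg hi]
      linarith

end Greedy

section LevelSet

variable {V : Type*} [Fintype V]

noncomputable def levelSet (x : V → ℝ) (θ : ℝ) : Finset V :=
  Finset.univ.filter fun i => θ ≤ x i

@[simp]
theorem mem_levelSet {x : V → ℝ} {θ : ℝ} {i : V} : i ∈ levelSet x θ ↔ θ ≤ x i := by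
  simp [levelSet]

variable [DecidableEq V]

theorem lovasz_eq_integral (f : Finset V → ℝ) (x : V → ℝ) :
    lovasz f x = ∫ θ in Set.Ioo (0:ℝ) 1, f (levelSet x θ) := rfl

theorem charVec_levelSet_apply (x : V → ℝ) (θ : ℝ) (i : V) :
    charVec (levelSet x θ) i = (Set.Iic (x i)).indicator 1 θ := by
  simp [charVec, Set.indicator_apply]

theorem integral_Ioo_indicator_Iic {v : ℝ} (hv : v ∈ Set.Icc (0:ℝ) 1) :
    ∫ θ in Set.Ioo (0:ℝ) 1, (Set.Iic v).indicator 1 θ = v := by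
  rw [← integral_Ioc_eq_integral_Ioo, integral_indicator_one measurableSet_Iic,
    measureReal_restrict_apply measurableSet_Iic, Set.inter_comm, Set.Ioc_inter_Iic,
    inf_eq_right.mpr hv.2, Real.volume_real_Ioc_of_le hv.1, sub_zero]

theorem integrableOn_charVec_levelSet (x : V → ℝ) :
    IntegrableOn (fun θ => charVec (levelSet x θ)) (Set.Ioo 0 1) :=
  Integrable.of_eval fun i => by
    simp_rw [charVec_levelSet_apply]
    exact (integrable_const 1).indicator measurableSet_Iic

theorem integral_charVec_levelSet {x : V → ℝ} (hx : ∀ i, x i ∈ Set.Icc (0:ℝ) 1) :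
    ∫ θ in Set.Ioo (0:ℝ) 1, charVec (levelSet x θ) = x := by
  ext i
  rw [eval_integral (integrableOn_charVec_levelSet x).eval]
  simp_rw [charVec_levelSet_apply]
  exact integral_Ioo_indicator_Iic (hx i)

theorem integrableOn_linearMap_charVec_levelSet (φ : (V → ℝ) →ₗ[ℝ] ℝ) (x : V → ℝ) :
    IntegrableOn (fun θ => φ (charVec (levelSet x θ))) (Set.Ioo 0 1) :=
  (LinearMap.toContinuousLinearMap φ).integrable_comp (integrableOn_charVec_levelSet x)

theorem integral_linearMap_charVec_levelSet (φ : (V → ℝ) →ₗ[ℝ] ℝ) {x : V → ℝ}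
    (hx : ∀ i, x i ∈ Set.Icc (0:ℝ) 1) :
    ∫ θ in Set.Ioo (0:ℝ) 1, φ (charVec (levelSet x θ)) = φ x := by
  conv_rhs => rw [← integral_charVec_levelSet hx]
  exact (LinearMap.toContinuousLinearMap φ).integral_comp_comm (integrableOn_charVec_levelSet x)

theorem integral_const_add_linearMap_charVec_levelSet (c : ℝ) (φ : (V → ℝ) →ₗ[ℝ] ℝ)
    {x : V → ℝ} (hx : ∀ i, x i ∈ Set.Icc (0:ℝ) 1) :
    ∫ θ in Set.Ioo (0:ℝ) 1, (c + φ (charVec (levelSet x θ))) = c + φ x := by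
  rw [integral_add (integrable_const c) (integrableOn_linearMap_charVec_levelSet φ x),
    integral_linearMap_charVec_levelSet φ hx, setIntegral_const,
    Real.volume_real_Ioo_of_le zero_le_one, sub_zero, one_smul]

end LevelSet

section Lovasz

variable {V : Type*} [Fintype V] [DecidableEq V]

theorem exists_nodup_univ_list_pairwise_ge (x : V → ℝ) :
    ∃ L : List V, L.Nodup ∧ L.toFinset = Finset.univ ∧ L.Pairwise fun a b => x b ≤ x a := by
  have : Std.Total fun a b : V => x b ≤ x a := ⟨fun a b => le_total (x b) (x a)⟩
  have : IsTrans V fun a b => x b ≤ x a := ⟨fun _ _ _ hab hbc => hbc.trans hab⟩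
  have hperm := List.perm_insertionSort (fun a b => x b ≤ x a) Finset.univ.toList
  exact ⟨_, hperm.nodup_iff.mpr (Finset.nodup_toList _),
    (List.toFinset_eq_of_perm _ _ hperm).trans (Finset.toList_toFinset _),
    List.pairwise_insertionSort _ _⟩

variable {f : Finset V → ℝ} {x : V → ℝ}

theorem add_greedyForm_charVec_levelSet {L : List V} (hLV : L.toFinset = Finset.univ)
    (hL : L.Pairwise fun a b => x b ≤ x a) (θ : ℝ) :
    f ∅ + greedyForm f L ∅ (charVec (levelSet x θ)) = f (levelSet x θ) := by
  have hinitial : L.Pairwise fun a b => b ∈ levelSet x θ → a ∈ levelSet x θ :=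
    hL.imp fun hba hb => mem_levelSet.mpr ((mem_levelSet.mp hb).trans hba)
  rw [add_greedyForm_charVec hinitial, Finset.empty_union, hLV, Finset.univ_inter]

theorem lovasz_eq_greedyForm (hx : ∀ i, x i ∈ Set.Icc (0:ℝ) 1) {L : List V}
    (hLV : L.toFinset = Finset.univ) (hL : L.Pairwise fun a b => x b ≤ x a) :
    lovasz f x = f ∅ + greedyForm f L ∅ x := by
  simp_rw [lovasz_eq_integral, ← add_greedyForm_charVec_levelSet hLV hL]
  exact integral_const_add_linearMap_charVec_levelSet _ _ hx

theorem Submodular.greedyForm_le_lovasz (hf : Submodular f) (hx : ∀ i, x i ∈ Set.Icc (0:ℝ) 1)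
    {L : List V} (hL : L.Nodup) (hLV : L.toFinset = Finset.univ) :
    f ∅ + greedyForm f L ∅ x ≤ lovasz f x := by
  obtain ⟨L', -, hL'V, hL'⟩ := exists_nodup_univ_list_pairwise_ge x
  rw [lovasz_eq_greedyForm hx hL'V hL', ← integral_const_add_linearMap_charVec_levelSet _ _ hx,
    ← integral_const_add_linearMap_charVec_levelSet _ _ hx]
  refine integral_mono ((integrable_const _).add (integrableOn_linearMap_charVec_levelSet _ x))
    ((integrable_const _).add (integrableOn_linearMap_charVec_levelSet _ x)) fun θ => ?_
  have hle := hf.add_greedyForm_charVec_le hL (subset_refl ∅) (by simp) (levelSet x θ)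
  rwa [Finset.empty_union, hLV, Finset.univ_inter,
    ← add_greedyForm_charVec_levelSet (f := f) hL'V hL'] at hle

end Lovasz

theorem lovasz_convexOn_general {V : Type*} [Fintype V] [DecidableEq V]
    (f : Finset V → ℝ) (hf : Submodular f) :
    ConvexOn ℝ {x : V → ℝ | ∀ i, x i ∈ Set.Icc (0:ℝ) 1} (lovasz f) := by
  have hcube : Convex ℝ {x : V → ℝ | ∀ i, x i ∈ Set.Icc (0:ℝ) 1} :=
    fun x hx y hy a b ha hb hab i => convex_Icc (0:ℝ) 1 (hx i) (hy i) ha hb hab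
  refine ⟨hcube, fun x hx y hy a b ha hb hab => ?_⟩
  obtain ⟨L, hL, hLV, hsorted⟩ := exists_nodup_univ_list_pairwise_ge (a • x + b • y)
  have hx' := hf.greedyForm_le_lovasz hx hL hLV
  have hy' := hf.greedyForm_le_lovasz hy hL hLV
  calc lovasz f (a • x + b • y)
      = a * (f ∅ + greedyForm f L ∅ x) + b * (f ∅ + greedyForm f L ∅ y) := by
        rw [lovasz_eq_greedyForm (hcube hx hy ha hb hab) hLV hsorted, map_add, map_smul, map_smul,
          smul_eq_mul, smul_eq_mul]
        linear_combination (-f ∅) * hab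
    _ ≤ a • lovasz f x + b • lovasz f y := by
        simp only [smul_eq_mul]
        gcongr

/-- The Lovász extension of a submodular function is convex on `[0,1]^V`. -/
theorem lovasz_convexOn {V : Type*} [Fintype V] [DecidableEq V]
    (f : Finset V → ℝ) (hf : Submodular f) (hnn : ∀ A : Finset V, 0 ≤ f A) :
    ConvexOn ℝ {x : V → ℝ | ∀ i, x i ∈ Set.Icc (0:ℝ) 1} (lovasz f) :=
  lovasz_convexOn_general f hf
end

section
/- Let Greedy be the standard greedy algorithm for maximizing a submodular function f subject to a hereditary constraint family I, which iteratively adds the feasible element of maximum positive marginal gain (with a fixed tie-breaking rule). If A, B ⊆ V are disjoint and for every e ∈ B we have Greedy(A ∪ {e}) = Greedy(A), then Greedy(A ∪ B) = Greedy(A). -/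
open MeasureTheory Finset

/-- One pass of the standard greedy algorithm with fuel `n`: at each step add the
feasible element of `X` with maximum nonnegative marginal gain, breaking ties by
the fixed linear order on `V` (choosing the least maximizer). -/
noncomputable def greedyAux {V : Type*} [Fintype V] [DecidableEq V] [LinearOrder V]
    (f : Finset V → ℝ) (I : Finset V → Prop) [DecidablePred I]
    (X : Finset V) : ℕ → Finset V → Finset V
  | 0, S => S
  | (n+1), S =>
    let C := (X \ S).filter (fun e => I (insert e S) ∧ 0 ≤ f (insert e S) - f S)
    let M := C.filter (fun e => ∀ e' ∈ C, f (insert e' S) - f S ≤ f (insert e S) - f S)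
    if h : M.Nonempty then greedyAux f I X n (insert (M.min' h) S) else S

/-- The standard greedy algorithm on ground set `X`. -/
noncomputable def greedy {V : Type*} [Fintype V] [DecidableEq V] [LinearOrder V]
    (f : Finset V → ℝ) (I : Finset V → Prop) [DecidablePred I]
    (X : Finset V) : Finset V :=
  greedyAux f I X (Fintype.card V) ∅

/-! Run the greedy algorithm on `A ∪ B` and on `A` in lockstep. At a common state `S`, an
element `b ∈ B` that is a feasible candidate would be chosen on `A ∪ {b}` unless the choice
made on `A` beats it; since `b` never enters `greedy (A ∪ {b}) = greedy A`, the choice on `A`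
beats every such `b` simultaneously, so it is also the choice on `A ∪ B`. The invariant that
no `b` is ever picked from the common state is inherited by the next state. -/

def IsLeastArgmax {α β : Type*} [LinearOrder α] [LinearOrder β] (g : α → β) (s : Finset α)
    (x : α) : Prop :=
  x ∈ s ∧ ∀ y ∈ s, g y < g x ∨ (g y = g x ∧ x ≤ y)

namespace IsLeastArgmax

variable {α β : Type*} [LinearOrder α] [LinearOrder β] {g : α → β} {s t : Finset α}
  {x y : α}

theorem min'_of_forall_mem_iff {M : Finset α}
    (hM : ∀ e, e ∈ M ↔ e ∈ s ∧ ∀ e' ∈ s, g e' ≤ g e) (h : M.Nonempty) :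
    IsLeastArgmax g s (M.min' h) := by
  obtain ⟨hxs, hxmax⟩ := (hM _).1 (M.min'_mem h)
  refine ⟨hxs, fun y hy => (hxmax y hy).lt_or_eq.imp_right fun hyx => ⟨hyx, M.min'_le y ?_⟩⟩
  exact (hM y).2 ⟨hy, fun e' he' => hyx ▸ hxmax e' he'⟩

theorem exists_of_nonempty (g : α → β) (hs : s.Nonempty) : ∃ x, IsLeastArgmax g s x := by
  obtain ⟨x, hxs, hxmax⟩ := s.exists_max_image g hs
  exact ⟨_, min'_of_forall_mem_iff (fun _ => Finset.mem_filter)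
    ⟨x, Finset.mem_filter.2 ⟨hxs, hxmax⟩⟩⟩

theorem unique (hx : IsLeastArgmax g s x) (hy : IsLeastArgmax g s y) : x = y := by
  rcases hx.2 y hy.1 with hlt | ⟨hg, hxy⟩ <;> rcases hy.2 x hx.1 with hlt' | ⟨hg', hyx⟩
  · exact absurd hlt' hlt.not_gt
  · exact absurd hg'.symm hlt.ne
  · exact absurd hg hlt'.ne'
  · exact le_antisymm hxy hyx

theorem of_subset (hx : IsLeastArgmax g t x) (hst : s ⊆ t) (hxs : x ∈ s) :
    IsLeastArgmax g s x :=
  ⟨hxs, fun y hy => hx.2 y (hst hy)⟩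

variable [DecidableEq α]

theorem union (hx : IsLeastArgmax g s x)
    (ht : ∀ b ∈ t, ∀ y, IsLeastArgmax g (s ∪ {b}) y → y ≠ b) :
    IsLeastArgmax g (s ∪ t) x := by
  refine ⟨Finset.mem_union_left t hx.1, fun b hb => ?_⟩
  rcases Finset.mem_union.1 hb with hbs | hbt
  · exact hx.2 b hbs
  obtain ⟨y, hy⟩ := exists_of_nonempty g (⟨b, by simp⟩ : (s ∪ {b}).Nonempty)
  have hys : y ∈ s :=
    (Finset.mem_union.1 hy.1).resolve_right fun h => ht b hbt y hy (Finset.mem_singleton.1 h)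
  obtain rfl := (hy.of_subset Finset.subset_union_left hys).unique hx
  exact hy.2 b (by simp)

theorem eq_empty_of_forall_ne (hs : s = ∅)
    (ht : ∀ b ∈ t, ∀ y, IsLeastArgmax g (s ∪ {b}) y → y ≠ b) : t = ∅ := by
  refine Finset.eq_empty_of_forall_notMem fun b hb => ?_
  obtain ⟨y, hy⟩ := exists_of_nonempty g (⟨b, by simp⟩ : (s ∪ {b}).Nonempty)
  have hyb : y = b := by simpa [hs] using hy.1
  exact ht b hb y hy hyb

end IsLeastArgmax

section Greedy

variable {V : Type*} [DecidableEq V] {f : Finset V → ℝ} {I : Finset V → Prop}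
  [DecidablePred I]

variable (f I) in
noncomputable def greedyCand (X S : Finset V) : Finset V :=
  (X \ S).filter fun e => I (insert e S) ∧ 0 ≤ f (insert e S) - f S

theorem greedyCand_union (X Y S : Finset V) :
    greedyCand f I (X ∪ Y) S = greedyCand f I X S ∪ greedyCand f I Y S := by
  rw [greedyCand, Finset.union_sdiff_distrib, Finset.filter_union]; rfl

theorem greedyCand_mono {X Y : Finset V} (h : X ⊆ Y) (S : Finset V) :
    greedyCand f I X S ⊆ greedyCand f I Y S :=
  Finset.filter_subset_filter _ (Finset.sdiff_subset_sdiff h le_rfl)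

theorem greedyCand_subset (X S : Finset V) : greedyCand f I X S ⊆ X :=
  (Finset.filter_subset _ _).trans Finset.sdiff_subset

theorem greedyCand_singleton {X S : Finset V} {b : V} (hb : b ∈ greedyCand f I X S) :
    greedyCand f I {b} S = {b} := by
  ext x
  simp only [greedyCand, Finset.mem_filter, Finset.mem_sdiff, Finset.mem_singleton] at hb ⊢
  constructor
  · exact fun h => h.1.1
  · rintro rfl
    exact ⟨⟨rfl, hb.1.2⟩, hb.2⟩

variable [Fintype V] [LinearOrder V]

theorem greedyAux_succ_of_isLeastArgmax {X S : Finset V} {x : V} (n : ℕ)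
    (hx : IsLeastArgmax (fun e => f (insert e S) - f S) (greedyCand f I X S) x) :
    greedyAux f I X (n + 1) S = greedyAux f I X n (insert x S) := by
  have hM : ((greedyCand f I X S).filter fun e => ∀ e' ∈ greedyCand f I X S,
      f (insert e' S) - f S ≤ f (insert e S) - f S).Nonempty := by
    obtain ⟨y, hy, hymax⟩ := (greedyCand f I X S).exists_max_image
      (fun e => f (insert e S) - f S) ⟨x, hx.1⟩
    exact ⟨y, Finset.mem_filter.2 ⟨hy, hymax⟩⟩
  rw [greedyAux]
  have hmin := IsLeastArgmax.min'_of_forall_mem_iff (fun _ => Finset.mem_filter) hM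
  exact (dif_pos hM).trans (congrArg (fun y => greedyAux f I X n (insert y S)) (hmin.unique hx))

theorem greedyAux_succ_of_greedyCand_eq_empty {X S : Finset V} (n : ℕ)
    (h : greedyCand f I X S = ∅) : greedyAux f I X (n + 1) S = S := by
  have hM : ¬((greedyCand f I X S).filter fun e => ∀ e' ∈ greedyCand f I X S,
      f (insert e' S) - f S ≤ f (insert e S) - f S).Nonempty := by
    simp [h]
  rw [greedyAux]
  exact dif_neg hM

theorem subset_greedyAux (X : Finset V) : ∀ (n : ℕ) (S : Finset V), S ⊆ greedyAux f I X n S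
  | 0, _ => subset_rfl
  | n + 1, S => by
    rcases (greedyCand f I X S).eq_empty_or_nonempty with h | h
    · rw [greedyAux_succ_of_greedyCand_eq_empty n h]
    · obtain ⟨x, hx⟩ := IsLeastArgmax.exists_of_nonempty (fun e => f (insert e S) - f S) h
      rw [greedyAux_succ_of_isLeastArgmax n hx]
      exact (Finset.subset_insert x S).trans (subset_greedyAux X n _)

theorem greedyAux_subset (X : Finset V) :
    ∀ (n : ℕ) (S : Finset V), greedyAux f I X n S ⊆ X ∪ S
  | 0, _ => Finset.subset_union_right
  | n + 1, S => by
    rcases (greedyCand f I X S).eq_empty_or_nonempty with h | h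
    · rw [greedyAux_succ_of_greedyCand_eq_empty n h]
      exact Finset.subset_union_right
    · obtain ⟨x, hx⟩ := IsLeastArgmax.exists_of_nonempty (fun e => f (insert e S) - f S) h
      have hxX : x ∈ X ∪ S := Finset.mem_union_left S (greedyCand_subset X S hx.1)
      rw [greedyAux_succ_of_isLeastArgmax n hx, ← Finset.insert_eq_of_mem hxX,
        ← Finset.union_insert]
      exact greedyAux_subset X n _

theorem greedy_subset (X : Finset V) : greedy f I X ⊆ X :=
  (greedyAux_subset X _ ∅).trans (Finset.union_empty X).le

theorem ne_of_notMem_greedyAux_succ {X S : Finset V} {x b : V} {n : ℕ}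
    (hb : b ∉ greedyAux f I X (n + 1) S)
    (hx : IsLeastArgmax (fun e => f (insert e S) - f S) (greedyCand f I X S) x) : x ≠ b := by
  rintro rfl
  rw [greedyAux_succ_of_isLeastArgmax n hx] at hb
  exact hb (subset_greedyAux X n _ (Finset.mem_insert_self x S))

theorem greedyAux_union_eq_of_forall_notMem (A B : Finset V) :
    ∀ (n : ℕ) (S : Finset V), (∀ b ∈ B, b ∉ greedyAux f I (A ∪ {b}) n S) →
      greedyAux f I (A ∪ B) n S = greedyAux f I A n S
  | 0, _, _ => rfl
  | n + 1, S, hB => by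
    have hlose : ∀ b ∈ greedyCand f I B S,
        ∀ y, IsLeastArgmax (fun e => f (insert e S) - f S) (greedyCand f I A S ∪ {b}) y →
          y ≠ b := by
      intro b hb y hy
      rw [← greedyCand_singleton hb, ← greedyCand_union] at hy
      exact ne_of_notMem_greedyAux_succ (hB b (greedyCand_subset B S hb)) hy
    rcases (greedyCand f I A S).eq_empty_or_nonempty with hA | hA
    · have hAB : greedyCand f I (A ∪ B) S = ∅ := by
        rw [greedyCand_union, hA, IsLeastArgmax.eq_empty_of_forall_ne hA hlose,
          Finset.union_empty]
      rw [greedyAux_succ_of_greedyCand_eq_empty n hA, greedyAux_succ_of_greedyCand_eq_empty n hAB]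
    obtain ⟨m, hm⟩ := IsLeastArgmax.exists_of_nonempty (fun e => f (insert e S) - f S) hA
    have hm_union : ∀ Y ⊆ B,
        IsLeastArgmax (fun e => f (insert e S) - f S) (greedyCand f I (A ∪ Y) S) m := by
      intro Y hY
      rw [greedyCand_union]
      exact hm.union fun b hb => hlose b (greedyCand_mono hY S hb)
    rw [greedyAux_succ_of_isLeastArgmax n (hm_union B subset_rfl),
      greedyAux_succ_of_isLeastArgmax n hm]
    refine greedyAux_union_eq_of_forall_notMem A B n (insert m S) fun b hb => ?_
    rw [← greedyAux_succ_of_isLeastArgmax n (hm_union {b} (Finset.singleton_subset_iff.2 hb))]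
    exact hB b hb

end Greedy

theorem greedy_localization_general {V : Type*} [Fintype V] [DecidableEq V] [LinearOrder V]
    (f : Finset V → ℝ) (I : Finset V → Prop) [DecidablePred I]
    (A B : Finset V) (hdisj : Disjoint A B)
    (hB : ∀ e ∈ B, greedy f I (A ∪ {e}) = greedy f I A) :
    greedy f I (A ∪ B) = greedy f I A := by
  refine greedyAux_union_eq_of_forall_notMem A B _ ∅ fun b hb hmem => ?_
  have hbA : b ∈ greedy f I A := hB b hb ▸ hmem
  exact Finset.disjoint_left.1 hdisj (greedy_subset A hbA) hb

/-- Lemma 2 (localization): if adding any single element of `B` does not change the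
greedy solution on `A`, then neither does adding all of `B`. -/
theorem greedy_localization {V : Type*} [Fintype V] [DecidableEq V] [LinearOrder V]
    (f : Finset V → ℝ) (I : Finset V → Prop) [DecidablePred I]
    (hf : Submodular f) (hnn : ∀ A : Finset V, 0 ≤ f A)
    (hher : ∀ A B : Finset V, A ⊆ B → I B → I A) (hempty : I ∅)
    (A B : Finset V) (hdisj : Disjoint A B)
    (hB : ∀ e ∈ B, greedy f I (A ∪ {e}) = greedy f I A) :
    greedy f I (A ∪ B) = greedy f I A :=
  greedy_localization_general f I A B hdisj hB
end

section
/- In the RandGreeDi algorithm, if S = ∪_i Greedy(V_i) denotes the union of the first-round solutions and Alg is a β-approximation algorithm, then E[f(Alg(S))] ≥ β · f⁻(p), where p_e = Pr_{A~V(1/m)}[e ∈ Greedy(A ∪ {e})] for e ∈ OPT and 0 otherwise. -/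
open MeasureTheory Finset

/-- Expectation of `g` over a uniformly random assignment of elements to `m` machines. -/
noncomputable def expAssign {V : Type*} [Fintype V] [DecidableEq V] (m : ℕ) (g : (V → Fin m) → ℝ) : ℝ :=
  (∑ σ : V → Fin m, g σ) / (Fintype.card (V → Fin m) : ℝ)

/-- The set of elements assigned to machine `i` by the assignment `σ`. -/
def machineSet {V : Type*} [Fintype V] [DecidableEq V] {m : ℕ}
    (σ : V → Fin m) (i : Fin m) : Finset V :=
  Finset.univ.filter (fun e => σ e = i)

set_option linter.unusedSectionVars false
set_option linter.unusedVariables false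
set_option maxHeartbeats 1000000


section Sorted
variable {V : Type*} [Fintype V] [DecidableEq V]

/-- Prefix of size `k` w.r.t. the enumeration `g`. -/
def preS (g : Fin (Fintype.card V) ≃ V) (k : ℕ) : Finset V :=
  univ.filter (fun v => ((g.symm v : Fin _) : ℕ) < k)

lemma mem_preS {g : Fin (Fintype.card V) ≃ V} {k : ℕ} {v : V} :
    v ∈ preS g k ↔ ((g.symm v : Fin _) : ℕ) < k := by simp [preS]

lemma preS_zero (g : Fin (Fintype.card V) ≃ V) : preS g 0 = ∅ := by
  ext v; simp [mem_preS]

lemma preS_univ (g : Fin (Fintype.card V) ≃ V) {k : ℕ} (hk : Fintype.card V ≤ k) :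
    preS g k = univ := by
  ext v; simp only [mem_preS, mem_univ, iff_true]
  exact lt_of_lt_of_le (g.symm v).isLt hk

lemma preS_succ (g : Fin (Fintype.card V) ≃ V) {k : ℕ} (hk : k < Fintype.card V) :
    preS g (k + 1) = insert (g ⟨k, hk⟩) (preS g k) := by
  ext v
  rw [Finset.mem_insert, mem_preS, mem_preS, Nat.lt_succ_iff_lt_or_eq]
  have heq : (v = g ⟨k, hk⟩) ↔ ((g.symm v : ℕ) = k) := by
    rw [← Equiv.symm_apply_eq, Fin.ext_iff]
  rw [heq]
  tauto

lemma not_mem_preS (g : Fin (Fintype.card V) ≃ V) {k : ℕ} (hk : k < Fintype.card V) :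
    g ⟨k, hk⟩ ∉ preS g k := by
  simp [mem_preS]

lemma card_preS (g : Fin (Fintype.card V) ≃ V) (j : ℕ) :
    (preS g j).card = min j (Fintype.card V) := by
  classical
  have himg : (univ.filter (fun i : Fin (Fintype.card V) => (i : ℕ) < j)).image g = preS g j := by
    ext v
    simp only [Finset.mem_image, Finset.mem_filter, mem_univ, true_and, mem_preS]
    constructor
    · rintro ⟨i, hi, rfl⟩; simpa using hi
    · intro h; exact ⟨g.symm v, h, by simp⟩
  have h1 : (preS g j).card = (univ.filter (fun i : Fin (Fintype.card V) => (i : ℕ) < j)).card := by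
    rw [← himg, Finset.card_image_of_injective _ g.injective]
  rw [h1]
  have h2 : ((univ.filter (fun i : Fin (Fintype.card V) => (i : ℕ) < j)).image Fin.val)
      = Finset.range (min j (Fintype.card V)) := by
    ext a
    simp only [Finset.mem_image, Finset.mem_filter, mem_univ, true_and, Finset.mem_range,
      lt_min_iff]
    constructor
    · rintro ⟨i, hi, rfl⟩; exact ⟨hi, i.isLt⟩
    · rintro ⟨h1, h2⟩; exact ⟨⟨a, h2⟩, h1, rfl⟩
  rw [← Finset.card_image_of_injective _ Fin.val_injective, h2, Finset.card_range]

/-- A down-closed set equals the prefix of its cardinality. -/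
lemma downclosed_eq_preS (g : Fin (Fintype.card V) ≃ V) (F : Finset V)
    (hF : ∀ v w : V, v ∈ F → g.symm w ≤ g.symm v → w ∈ F) :
    F = preS g F.card := by
  ext v
  rw [mem_preS]
  constructor
  · intro hv
    have hsub : preS g ((g.symm v : ℕ) + 1) ⊆ F := by
      intro w hw
      exact hF v w hv (by
        have := mem_preS.mp hw
        exact Fin.le_def.mpr (Nat.lt_succ_iff.mp this))
    have := Finset.card_le_card hsub
    rw [card_preS] at this
    have hlt : ((g.symm v : ℕ) + 1) ≤ Fintype.card V := (g.symm v).isLt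
    omega
  · intro hv
    by_contra hvF
    have hsub : F ⊆ preS g (g.symm v : ℕ) := by
      intro w hw
      rw [mem_preS]
      by_contra hge
      exact hvF (hF w v hw (Fin.le_def.mpr (le_of_not_gt hge)))
    have := Finset.card_le_card hsub
    rw [card_preS] at this
    omega

end Sorted

section YV
variable {V : Type*} [Fintype V] [DecidableEq V]

/-- Marginal gain of element `e` when added to its prefix. -/
noncomputable def yv (f : Finset V → ℝ) (g : Fin (Fintype.card V) ≃ V) (e : V) : ℝ :=
  f (preS g ((g.symm e : ℕ) + 1)) - f (preS g (g.symm e : ℕ))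

lemma yv_nonneg {f : Finset V → ℝ} (hmono : ∀ A B : Finset V, A ⊆ B → f A ≤ f B)
    (g : Fin (Fintype.card V) ≃ V) (e : V) : 0 ≤ yv f g e := by
  have : preS g (g.symm e : ℕ) ⊆ preS g ((g.symm e : ℕ) + 1) := by
    intro w hw; rw [mem_preS] at hw ⊢; omega
  have := hmono _ _ this
  simp only [yv]; linarith

lemma f_preS_eq (f : Finset V → ℝ) (g : Fin (Fintype.card V) ≃ V) (k : ℕ)
    (hk : k ≤ Fintype.card V) :
    f (preS g k) = f ∅ + ∑ e ∈ preS g k, yv f g e := by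
  induction k with
  | zero => simp [preS_zero]
  | succ k ih =>
    have hklt : k < Fintype.card V := hk
    rw [preS_succ g hklt, Finset.sum_insert (not_mem_preS g hklt)]
    have hy : yv f g (g ⟨k, hklt⟩) = f (preS g (k + 1)) - f (preS g k) := by
      simp [yv]
    rw [hy, ← preS_succ g hklt, ih (le_of_lt hklt)]
    ring

/-- Key submodularity bound: the greedy vertex is in the submodular polyhedron. -/
lemma sum_yv_le {f : Finset V → ℝ}
    (hsub : Submodular f) (g : Fin (Fintype.card V) ≃ V) (T : Finset V) :
    ∑ e ∈ T, yv f g e ≤ f T - f ∅ := by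
  have key : ∀ k : ℕ, ∑ e ∈ T ∩ preS g k, yv f g e ≤ f (T ∩ preS g k) - f ∅ := by
    intro k
    induction k with
    | zero => simp [preS_zero]
    | succ k ih =>
      by_cases hklt : k < Fintype.card V
      · set a := g ⟨k, hklt⟩ with ha
        rw [preS_succ g hklt]
        by_cases haT : a ∈ T
        · have hins : T ∩ insert a (preS g k) = insert a (T ∩ preS g k) := by
            ext v
            simp only [Finset.mem_inter, Finset.mem_insert]
            constructor
            · rintro ⟨h1, h2 | h2⟩
              · exact Or.inl h2
              · exact Or.inr ⟨h1, h2⟩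
            · rintro (h | ⟨h1, h2⟩)
              · exact ⟨by rwa [h], Or.inl h⟩
              · exact ⟨h1, Or.inr h2⟩
          have hanotin : a ∉ T ∩ preS g k := by
            simp only [Finset.mem_inter, not_and_or]
            exact Or.inr (not_mem_preS g hklt)
          rw [hins, Finset.sum_insert hanotin]
          -- submodularity: yv f g a ≤ f (insert a (T ∩ preS g k)) - f (T ∩ preS g k)
          have hsubm := hsub (insert a (T ∩ preS g k)) (preS g k)
          have hU : insert a (T ∩ preS g k) ∪ preS g k = insert a (preS g k) := by
            ext v; simp only [Finset.mem_union, Finset.mem_insert, Finset.mem_inter]; tauto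
          have hI : insert a (T ∩ preS g k) ∩ preS g k = T ∩ preS g k := by
            ext v
            simp only [Finset.mem_inter, Finset.mem_insert]
            constructor
            · rintro ⟨h1 | h1, h2⟩
              · exact absurd (by rwa [h1] at h2) (not_mem_preS g hklt)
              · exact h1
            · rintro ⟨h1, h2⟩; exact ⟨Or.inr ⟨h1, h2⟩, h2⟩
          rw [hU, hI] at hsubm
          have hya : yv f g a = f (insert a (preS g k)) - f (preS g k) := by
            rw [← preS_succ g hklt]; simp [yv, ha]
          linarith
        · have hins : T ∩ insert a (preS g k) = T ∩ preS g k := by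
            ext v
            simp only [Finset.mem_inter, Finset.mem_insert]
            constructor
            · rintro ⟨h1, h2 | h2⟩
              · exact absurd (by rwa [h2] at h1) haT
              · exact ⟨h1, h2⟩
            · rintro ⟨h1, h2⟩; exact ⟨h1, Or.inr h2⟩
          rw [hins]; exact ih
      · have : preS g (k + 1) = preS g k := by
          have h1 := preS_univ g (k := k) (by omega)
          have h2 := preS_univ g (k := k + 1) (by omega)
          rw [h1, h2]
        rw [this]; exact ih
  have := key (Fintype.card V)
  rwa [preS_univ g le_rfl, Finset.inter_univ] at this

end YV

section LovaszEq
variable {V : Type*} [Fintype V] [DecidableEq V]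

lemma filter_eq_preS (p : V → ℝ) (g : Fin (Fintype.card V) ≃ V)
    (hg : ∀ j k : Fin (Fintype.card V), j ≤ k → p (g k) ≤ p (g j)) (θ : ℝ) :
    univ.filter (fun v => θ ≤ p v) = preS g (univ.filter (fun v => θ ≤ p v)).card := by
  apply downclosed_eq_preS
  intro v w hv hle
  rw [Finset.mem_filter] at hv ⊢
  refine ⟨mem_univ w, le_trans hv.2 ?_⟩
  have := hg (g.symm w) (g.symm v) hle
  simpa using this

lemma pointwise_levelset (f : Finset V → ℝ) (p : V → ℝ) (g : Fin (Fintype.card V) ≃ V)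
    (hg : ∀ j k : Fin (Fintype.card V), j ≤ k → p (g k) ≤ p (g j)) (θ : ℝ) :
    f (univ.filter (fun v => θ ≤ p v))
      = f ∅ + ∑ e : V, yv f g e * (if θ ≤ p e then 1 else 0) := by
  have hF := filter_eq_preS p g hg θ
  have hcard : (univ.filter (fun v => θ ≤ p v)).card ≤ Fintype.card V := by
    rw [← Finset.card_univ]; exact Finset.card_filter_le _ _
  rw [hF, f_preS_eq f g _ hcard, ← hF]
  congr 1
  rw [Finset.sum_filter]
  apply Finset.sum_congr rfl
  intro e _
  by_cases h : θ ≤ p e <;> simp [h]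

lemma integral_ind_le (c : ℝ) (hc0 : 0 ≤ c) (hc1 : c ≤ 1) :
    ∫ θ in Set.Ioo (0:ℝ) 1, (if θ ≤ c then (1:ℝ) else 0) = c := by
  have hind : (fun θ : ℝ => if θ ≤ c then (1:ℝ) else 0)
      = (Set.Iic c).indicator (fun _ => (1:ℝ)) := by
    funext θ
    simp [Set.indicator_apply, Set.mem_Iic]
  rw [hind, MeasureTheory.setIntegral_indicator measurableSet_Iic,
    MeasureTheory.setIntegral_const]
  have hvol : volume (Set.Ioo (0:ℝ) 1 ∩ Set.Iic c) = ENNReal.ofReal c := by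
    rcases lt_or_eq_of_le hc1 with h1 | h1
    · have : Set.Ioo (0:ℝ) 1 ∩ Set.Iic c = Set.Ioc 0 c := by
        ext θ
        simp only [Set.mem_inter_iff, Set.mem_Ioo, Set.mem_Iic, Set.mem_Ioc]
        constructor
        · rintro ⟨⟨h2, _⟩, h4⟩; exact ⟨h2, h4⟩
        · rintro ⟨h2, h3⟩; exact ⟨⟨h2, lt_of_le_of_lt h3 h1⟩, h3⟩
      rw [this, Real.volume_Ioc, sub_zero]
    · have : Set.Ioo (0:ℝ) 1 ∩ Set.Iic c = Set.Ioo 0 1 := by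
        apply Set.inter_eq_left.mpr
        intro θ hθ
        exact le_of_lt (h1 ▸ hθ.2)
      rw [this, Real.volume_Ioo, sub_zero, ← h1]
  rw [measureReal_def, hvol, smul_eq_mul, mul_one, ENNReal.toReal_ofReal hc0]

lemma integrableOn_ind (c : ℝ) :
    MeasureTheory.IntegrableOn (fun θ : ℝ => if θ ≤ c then (1:ℝ) else 0)
      (Set.Ioo (0:ℝ) 1) volume := by
  have hind : (fun θ : ℝ => if θ ≤ c then (1:ℝ) else 0)
      = (Set.Iic c).indicator (fun _ => (1:ℝ)) := by
    funext θ; simp [Set.indicator_apply, Set.mem_Iic]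
  rw [hind]
  apply MeasureTheory.Integrable.indicator _ measurableSet_Iic
  rw [MeasureTheory.integrable_const_iff]
  right
  constructor; rw [Measure.restrict_apply_univ, Real.volume_Ioo]
  exact ENNReal.ofReal_lt_top

lemma lovasz_eq_sum (f : Finset V → ℝ) (p : V → ℝ) (g : Fin (Fintype.card V) ≃ V)
    (hg : ∀ j k : Fin (Fintype.card V), j ≤ k → p (g k) ≤ p (g j))
    (hp0 : ∀ e, 0 ≤ p e) (hp1 : ∀ e, p e ≤ 1) :
    lovasz f p = f ∅ + ∑ e : V, yv f g e * p e := by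
  unfold lovasz
  have hfe : (fun θ : ℝ => f (univ.filter (fun i => θ ≤ p i)))
      = fun θ => f ∅ + ∑ e : V, yv f g e * (if θ ≤ p e then 1 else 0) :=
    funext (pointwise_levelset f p g hg)
  rw [hfe]
  have hconst : MeasureTheory.IntegrableOn (fun _ : ℝ => f ∅) (Set.Ioo (0:ℝ) 1) volume := by
    exact MeasureTheory.integrableOn_const (by rw [Real.volume_Ioo]; exact ENNReal.ofReal_ne_top)
  have hterm : ∀ e : V, MeasureTheory.IntegrableOn
      (fun θ : ℝ => yv f g e * (if θ ≤ p e then 1 else 0)) (Set.Ioo (0:ℝ) 1) volume :=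
    fun e => (integrableOn_ind (p e)).const_mul _
  have hsumI : MeasureTheory.IntegrableOn
      (fun θ : ℝ => ∑ e : V, yv f g e * (if θ ≤ p e then 1 else 0))
      (Set.Ioo (0:ℝ) 1) volume :=
    MeasureTheory.integrable_finset_sum _ (fun e _ => hterm e)
  rw [MeasureTheory.integral_add hconst hsumI, MeasureTheory.integral_finset_sum _
    (fun e _ => hterm e), MeasureTheory.setIntegral_const]
  rw [measureReal_def, Real.volume_Ioo, sub_zero, ENNReal.toReal_ofReal zero_le_one, one_smul]
  congr 1
  apply Finset.sum_congr rfl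
  intro e _
  rw [integral_const_mul, integral_ind_le (p e) (hp0 e) (hp1 e)]

end LovaszEq

section Prob
variable {V : Type*} [Fintype V] [DecidableEq V] [LinearOrder V]

lemma mem_machineSet {m : ℕ} {σ : V → Fin m} {i : Fin m} {x : V} :
    x ∈ machineSet σ i ↔ σ x = i := by simp [machineSet]

lemma prob_le (f : Finset V → ℝ) (I : Finset V → Prop) [DecidablePred I]
    {m : ℕ} (i₀ : Fin m) (e : V) :
    (∑ σ : V → Fin m, (if e ∈ greedy f I (insert e (machineSet σ i₀)) then (1:ℝ) else 0))
      ≤ ∑ σ : V → Fin m, (if e ∈ Finset.univ.biUnion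
          (fun i : Fin m => greedy f I (machineSet σ i)) then (1:ℝ) else 0) := by
  classical
  set φ : (V → Fin m) → (V → Fin m) :=
    fun σ => fun x => if x = e then σ e else Equiv.swap (σ e) i₀ (σ x) with hφ
  have hφe : ∀ σ, φ σ e = σ e := fun σ => by simp [hφ]
  have hinv : Function.Involutive φ := by
    intro σ
    funext x
    by_cases hx : x = e
    · simp [hφ, hx]
    · show (if x = e then (φ σ) e else Equiv.swap ((φ σ) e) i₀ ((φ σ) x)) = σ x
      have hφx : φ σ x = Equiv.swap (σ e) i₀ (σ x) := if_neg hx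
      rw [if_neg hx, hφe, hφx, Equiv.swap_apply_self]
  have hmach : ∀ σ : V → Fin m, machineSet (φ σ) (σ e) = insert e (machineSet σ i₀) := by
    intro σ
    ext x
    rw [mem_machineSet, Finset.mem_insert, mem_machineSet]
    by_cases hx : x = e
    · simp [hφ, hx]
    · have hφx : φ σ x = Equiv.swap (σ e) i₀ (σ x) := if_neg hx
      rw [hφx]
      constructor
      · intro h
        right
        have := congrArg (Equiv.swap (σ e) i₀) h
        rwa [Equiv.swap_apply_self, Equiv.swap_apply_left] at this
      · rintro (h | h)
        · exact absurd h hx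
        · rw [h, Equiv.swap_apply_right]
  have key : ∀ σ : V → Fin m,
      (if e ∈ greedy f I (insert e (machineSet σ i₀)) then (1:ℝ) else 0)
        ≤ (if e ∈ Finset.univ.biUnion
            (fun i : Fin m => greedy f I (machineSet (φ σ) i)) then (1:ℝ) else 0) := by
    intro σ
    by_cases h : e ∈ greedy f I (insert e (machineSet σ i₀))
    · rw [if_pos h,
        if_pos (Finset.mem_biUnion.mpr ⟨σ e, Finset.mem_univ _, by rw [hmach σ]; exact h⟩)]
    · rw [if_neg h]
      by_cases h2 : e ∈ Finset.univ.biUnion (fun i : Fin m => greedy f I (machineSet (φ σ) i))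
      · rw [if_pos h2]; norm_num
      · rw [if_neg h2]
  calc (∑ σ : V → Fin m, (if e ∈ greedy f I (insert e (machineSet σ i₀)) then (1:ℝ) else 0))
      ≤ ∑ σ : V → Fin m, (if e ∈ Finset.univ.biUnion
          (fun i : Fin m => greedy f I (machineSet (φ σ) i)) then (1:ℝ) else 0) :=
        Finset.sum_le_sum (fun σ _ => key σ)
    _ = _ := Equiv.sum_comp hinv.toPerm
        (fun σ => if e ∈ Finset.univ.biUnion
          (fun i : Fin m => greedy f I (machineSet σ i)) then (1:ℝ) else 0)

end Prob

lemma exists_antitone_equiv {V : Type*} [Fintype V] [DecidableEq V] (p : V → ℝ) :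
    ∃ g : Fin (Fintype.card V) ≃ V,
      ∀ j k : Fin (Fintype.card V), j ≤ k → p (g k) ≤ p (g j) := by
  classical
  let ε := Fintype.equivFin V
  let x : Fin (Fintype.card V) → ℝ := fun i => - p (ε.symm i)
  refine ⟨(Tuple.sort x).trans ε.symm, ?_⟩
  intro j k hjk
  have := Tuple.monotone_sort x hjk
  simp only [Function.comp_apply, x, neg_le_neg_iff] at this
  simpa [Equiv.trans_apply] using this

theorem randgreedi_union_machine' {V : Type*} [Fintype V] [DecidableEq V] [LinearOrder V]
    (f : Finset V → ℝ) (I : Finset V → Prop) [DecidablePred I]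
    (hsub : Submodular f) (hmono : ∀ A B : Finset V, A ⊆ B → f A ≤ f B)
    (hnn : ∀ A : Finset V, 0 ≤ f A)
    (hher : ∀ A B : Finset V, A ⊆ B → I B → I A) (hempty : I ∅)
    (Alg : Finset V → Finset V) (β : ℝ) (hβ : 0 < β)
    (halg : ∀ V' O : Finset V, O ⊆ V' → I O → β * f O ≤ f (Alg V'))
    (m : ℕ) (OPT : Finset V) (hOPT : I OPT) (i₀ : Fin m) :
    β * lovasz f (fun e =>
        if e ∈ OPT then
          expAssign m (fun σ =>
            if e ∈ greedy f I (insert e (machineSet σ i₀)) then 1 else 0)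
        else 0)
      ≤ expAssign m (fun σ =>
          f (Alg (Finset.univ.biUnion (fun i : Fin m => greedy f I (machineSet σ i))))) := by
  classical
  set P : V → ℝ := fun e =>
    if e ∈ OPT then
      expAssign m (fun σ =>
        if e ∈ greedy f I (insert e (machineSet σ i₀)) then 1 else 0)
    else 0 with hP
  set bigS : (V → Fin m) → Finset V :=
    fun σ => Finset.univ.biUnion (fun i : Fin m => greedy f I (machineSet σ i)) with hbigS
  haveI : Nonempty (V → Fin m) := ⟨fun _ => i₀⟩
  set N : ℝ := (Fintype.card (V → Fin m) : ℝ) with hNdef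
  have hN : 0 < N := by
    rw [hNdef]
    exact_mod_cast Fintype.card_pos (α := V → Fin m)
  -- bounds on P
  have hp0 : ∀ e, 0 ≤ P e := by
    intro e
    simp only [hP]
    by_cases h : e ∈ OPT
    · rw [if_pos h]
      apply div_nonneg _ (le_of_lt hN)
      apply Finset.sum_nonneg
      intro σ _
      by_cases h2 : e ∈ greedy f I (insert e (machineSet σ i₀)) <;> simp [h2]
    · rw [if_neg h]
  have hp1 : ∀ e, P e ≤ 1 := by
    intro e
    simp only [hP]
    by_cases h : e ∈ OPT
    · rw [if_pos h]
      unfold expAssign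
      rw [div_le_one hN]
      calc (∑ σ : V → Fin m, if e ∈ greedy f I (insert e (machineSet σ i₀)) then (1:ℝ) else 0)
          ≤ ∑ _σ : V → Fin m, (1:ℝ) := by
            apply Finset.sum_le_sum
            intro σ _
            by_cases h2 : e ∈ greedy f I (insert e (machineSet σ i₀)) <;> simp [h2]
        _ = N := by rw [Finset.sum_const, Finset.card_univ]; simp [hNdef]
    · rw [if_neg h]; linarith
  obtain ⟨g, hg⟩ := exists_antitone_equiv P
  rw [lovasz_eq_sum f P g hg hp0 hp1]
  unfold expAssign
  rw [le_div_iff₀ hN]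
  -- counting function
  set cnt : V → ℝ := fun e => ∑ σ : V → Fin m, (if e ∈ OPT ∩ bigS σ then (1:ℝ) else 0) with hcnt
  have hcnt_nonneg : ∀ e, 0 ≤ cnt e := by
    intro e
    apply Finset.sum_nonneg
    intro σ _
    by_cases h2 : e ∈ OPT ∩ bigS σ <;> simp [h2]
  -- step 1: pointwise algorithm bound, summed
  have h1 : ∑ σ : V → Fin m, β * f (OPT ∩ bigS σ) ≤ ∑ σ : V → Fin m, f (Alg (bigS σ)) := by
    apply Finset.sum_le_sum
    intro σ _
    exact halg (bigS σ) (OPT ∩ bigS σ) Finset.inter_subset_right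
      (hher _ OPT Finset.inter_subset_left hOPT)
  -- step 2: submodular polyhedron bound, summed
  have h2 : ∑ σ : V → Fin m, (f ∅ + ∑ e ∈ OPT ∩ bigS σ, yv f g e)
      ≤ ∑ σ : V → Fin m, f (OPT ∩ bigS σ) := by
    apply Finset.sum_le_sum
    intro σ _
    have := sum_yv_le hsub g (OPT ∩ bigS σ)
    linarith
  -- step 3: exchange sums
  have h3 : ∑ σ : V → Fin m, (f ∅ + ∑ e ∈ OPT ∩ bigS σ, yv f g e)
      = N * f ∅ + ∑ e : V, yv f g e * cnt e := by
    rw [Finset.sum_add_distrib, Finset.sum_const, Finset.card_univ, nsmul_eq_mul]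
    congr 1
    calc ∑ σ : V → Fin m, ∑ e ∈ OPT ∩ bigS σ, yv f g e
        = ∑ σ : V → Fin m, ∑ e : V, (if e ∈ OPT ∩ bigS σ then yv f g e else 0) := by
          apply Finset.sum_congr rfl
          intro σ _
          rw [Finset.sum_ite_mem, Finset.univ_inter]
      _ = ∑ e : V, ∑ σ : V → Fin m, (if e ∈ OPT ∩ bigS σ then yv f g e else 0) :=
          Finset.sum_comm
      _ = ∑ e : V, yv f g e * cnt e := by
          apply Finset.sum_congr rfl
          intro e _
          rw [hcnt, Finset.mul_sum]
          apply Finset.sum_congr rfl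
          intro σ _
          by_cases h : e ∈ OPT ∩ bigS σ <;> simp [h]
  -- step 4: per-element probability bound
  have h4 : ∀ e : V, yv f g e * (P e * N) ≤ yv f g e * cnt e := by
    intro e
    by_cases he : e ∈ OPT
    · apply mul_le_mul_of_nonneg_left _ (yv_nonneg hmono g e)
      have hPe : P e * N
          = ∑ σ : V → Fin m, (if e ∈ greedy f I (insert e (machineSet σ i₀)) then (1:ℝ) else 0) := by
        simp only [hP, if_pos he]
        unfold expAssign
        rw [div_mul_cancel₀ _ (ne_of_gt hN)]
      rw [hPe]
      calc (∑ σ : V → Fin m, (if e ∈ greedy f I (insert e (machineSet σ i₀)) then (1:ℝ) else 0))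
          ≤ ∑ σ : V → Fin m, (if e ∈ bigS σ then (1:ℝ) else 0) := prob_le f I i₀ e
        _ = cnt e := by
            apply Finset.sum_congr rfl
            intro σ _
            have : e ∈ OPT ∩ bigS σ ↔ e ∈ bigS σ := by
              rw [Finset.mem_inter]
              exact ⟨fun h => h.2, fun h => ⟨he, h⟩⟩
            by_cases h : e ∈ bigS σ
            · rw [if_pos h, if_pos (this.mpr h)]
            · rw [if_neg h, if_neg (fun hc => h (this.mp hc))]
    · have : P e = 0 := by simp [hP, he]
      rw [this]
      rw [zero_mul, mul_zero]
      exact mul_nonneg (yv_nonneg hmono g e) (hcnt_nonneg e)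
  -- assemble
  have h5 : ∑ e : V, yv f g e * (P e * N) ≤ ∑ e : V, yv f g e * cnt e :=
    Finset.sum_le_sum (fun e _ => h4 e)
  have key : (f ∅ + ∑ e : V, yv f g e * P e) * N ≤ ∑ σ : V → Fin m, f (OPT ∩ bigS σ) := by
    have hexp : (f ∅ + ∑ e : V, yv f g e * P e) * N
        = N * f ∅ + ∑ e : V, yv f g e * (P e * N) := by
      rw [add_mul, Finset.sum_mul]
      congr 1
      · ring
      · apply Finset.sum_congr rfl
        intro e _
        ring
    rw [hexp]
    calc N * f ∅ + ∑ e : V, yv f g e * (P e * N)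
        ≤ N * f ∅ + ∑ e : V, yv f g e * cnt e := by linarith
      _ = ∑ σ : V → Fin m, (f ∅ + ∑ e ∈ OPT ∩ bigS σ, yv f g e) := h3.symm
      _ ≤ ∑ σ : V → Fin m, f (OPT ∩ bigS σ) := h2
  calc β * (f ∅ + ∑ e : V, yv f g e * P e) * N
      = β * ((f ∅ + ∑ e : V, yv f g e * P e) * N) := by ring
    _ ≤ β * ∑ σ : V → Fin m, f (OPT ∩ bigS σ) :=
        mul_le_mul_of_nonneg_left key (le_of_lt hβ)
    _ = ∑ σ : V → Fin m, β * f (OPT ∩ bigS σ) := Finset.mul_sum _ _ _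
    _ ≤ ∑ σ : V → Fin m, f (Alg (bigS σ)) := h1


/-- Lemma 4: expected value of the second-round solution on the union of first-round
greedy solutions. -/
theorem randgreedi_union_machine {V : Type*} [Fintype V] [DecidableEq V] [LinearOrder V]
    (f : Finset V → ℝ) (I : Finset V → Prop) [DecidablePred I]
    (hsub : Submodular f) (hmono : ∀ A B : Finset V, A ⊆ B → f A ≤ f B)
    (hnn : ∀ A : Finset V, 0 ≤ f A)
    (hher : ∀ A B : Finset V, A ⊆ B → I B → I A) (hempty : I ∅)
    (Alg : Finset V → Finset V) (β : ℝ) (hβ : 0 < β)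
    (halg : ∀ V' O : Finset V, O ⊆ V' → I O → β * f O ≤ f (Alg V'))
    (m : ℕ) (OPT : Finset V) (hOPT : I OPT) (i₀ : Fin m) :
    β * lovasz f (fun e =>
        if e ∈ OPT then
          expAssign m (fun σ =>
            if e ∈ greedy f I (insert e (machineSet σ i₀)) then 1 else 0)
        else 0)
      ≤ expAssign m (fun σ =>
          f (Alg (Finset.univ.biUnion (fun i : Fin m => greedy f I (machineSet σ i))))) := randgreedi_union_machine' f I hsub hmono hnn hher hempty Alg β hβ halg m OPT hOPT i₀
end

section
/- Suppose a random variable D satisfies E[f(D)] ≥ α·f⁻(𝟙_OPT − p) and E[f(D)] ≥ β·f⁻(p) for some vector p ∈ [0,1]^V with p ≤ 𝟙_OPT. Then E[f(D)] ≥ (αβ/(α+β))·f(OPT). -/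
/-!
For every threshold θ ∈ (0,1), the θ-cut of `𝟙_OPT - p` and the `(1 - θ)`-cut of `p` together
cover `OPT`, so submodularity and nonnegativity give `f OPT ≤ f (cut₁) + f (cut₂)`. Averaging over
θ, and using that `θ ↦ 1 - θ` preserves the uniform measure on `(0,1)`, yields
`f OPT ≤ f⁻(𝟙_OPT - p) + f⁻(p)`; the two hypotheses bound these by `ED / α` and `ED / β`.
-/

open MeasureTheory Finset

theorem Submodular.map_union_le {V : Type*} [DecidableEq V] {f : Finset V → ℝ}
    (hf : Submodular f) (hnn : ∀ A, 0 ≤ f A) (A B : Finset V) : f (A ∪ B) ≤ f A + f B := by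
  linarith [hf A B, hnn (A ∩ B)]

theorem integrableOn_comp_of_finite {X β : Type*} [MeasurableSpace X] [MeasurableSpace β]
    [Finite β] [MeasurableSingletonClass β] {μ : Measure X} {s : Set X} (f : β → ℝ)
    {g : X → β} (hg : Measurable g) (hs : μ s ≠ ⊤) : IntegrableOn (fun t => f (g t)) s μ := by
  obtain ⟨C, hC⟩ := (Set.finite_range fun b => ‖f b‖).bddAbove
  exact Measure.integrableOn_of_bounded hs ((measurable_of_finite f).comp hg).aestronglyMeasurable
    (ae_of_all _ fun t => hC ⟨g t, rfl⟩)

theorem setIntegral_Ioo_zero_one_comp_one_sub {E : Type*} [NormedAddCommGroup E]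
    [NormedSpace ℝ E] (h : ℝ → E) :
    ∫ θ in Set.Ioo (0:ℝ) 1, h (1 - θ) = ∫ θ in Set.Ioo (0:ℝ) 1, h θ := by
  simp only [← integral_Ioc_eq_integral_Ioo, ← intervalIntegral.integral_of_le zero_le_one,
    intervalIntegral.integral_comp_sub_left, sub_self, sub_zero]

theorem measurable_filter_le {V : Type*} [Fintype V] (x : V → ℝ) :
    Measurable fun θ : ℝ => univ.filter (fun i => θ ≤ x i) := by
  refine measurable_finset_iff.2 fun i => ?_
  simp only [mem_filter, mem_univ, true_and]
  exact measurableSet_setOfPred.1 measurableSet_Iic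

section Lovasz

variable {V : Type*} [Fintype V] [DecidableEq V]

theorem lovasz_eq_setIntegral_one_sub (f : Finset V → ℝ) (x : V → ℝ) :
    lovasz f x = ∫ θ in Set.Ioo (0:ℝ) 1, f (univ.filter (fun i => 1 - θ ≤ x i)) :=
  (setIntegral_Ioo_zero_one_comp_one_sub fun θ => f (univ.filter (fun i => θ ≤ x i))).symm

theorem filter_le_charVec_sub_union_filter_le {OPT : Finset V} {p : V → ℝ}
    (hp0 : ∀ e, 0 ≤ p e) (hp1 : ∀ e, p e ≤ charVec OPT e) {θ : ℝ} (hθ : θ ∈ Set.Ioo 0 1) :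
    univ.filter (fun i => θ ≤ charVec OPT i - p i) ∪ univ.filter (fun i => 1 - θ ≤ p i) = OPT := by
  ext i
  have h0 := hp0 i
  have h1 := hp1 i
  obtain ⟨hθ0, hθ1⟩ := hθ
  simp only [mem_union, mem_filter, mem_univ, true_and]
  by_cases hi : i ∈ OPT <;> simp only [charVec, hi, if_true, if_false, iff_true, iff_false] at h1 ⊢
  · by_contra! h
    linarith
  · rintro (h | h) <;> linarith

theorem Submodular.le_lovasz_add_lovasz {f : Finset V → ℝ} (hsub : Submodular f)
    (hnn : ∀ A, 0 ≤ f A) {OPT : Finset V} {p : V → ℝ} (hp0 : ∀ e, 0 ≤ p e)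
    (hp1 : ∀ e, p e ≤ charVec OPT e) :
    f OPT ≤ lovasz f (fun e => charVec OPT e - p e) + lovasz f p := by
  have hIoo : volume (Set.Ioo (0:ℝ) 1) ≠ ⊤ := measure_Ioo_lt_top.ne
  have hint₁ := integrableOn_comp_of_finite f
    (measurable_filter_le fun e => charVec OPT e - p e) hIoo
  have hint₂ : IntegrableOn (fun θ => f (univ.filter fun i => 1 - θ ≤ p i)) (Set.Ioo 0 1) :=
    integrableOn_comp_of_finite f
      ((measurable_filter_le p).comp (measurable_const.sub measurable_id)) hIoo
  have hcut : ∀ θ ∈ Set.Ioo (0:ℝ) 1, f OPT ≤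
      f (univ.filter fun i => θ ≤ charVec OPT i - p i) + f (univ.filter fun i => 1 - θ ≤ p i) := by
    intro θ hθ
    have h := hsub.map_union_le hnn (univ.filter fun i => θ ≤ charVec OPT i - p i)
      (univ.filter fun i => 1 - θ ≤ p i)
    rwa [filter_le_charVec_sub_union_filter_le hp0 hp1 hθ] at h
  rw [lovasz, lovasz_eq_setIntegral_one_sub, ← integral_add hint₁ hint₂]
  calc f OPT = ∫ _ in Set.Ioo (0:ℝ) 1, f OPT := by simp
    _ ≤ _ := setIntegral_mono_on (integrableOn_const hIoo) (hint₁.add hint₂) measurableSet_Ioo hcut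

end Lovasz

theorem mul_div_add_mul_le_of_le_add {α β a b c d : ℝ} (hα : 0 < α) (hβ : 0 < β)
    (hc : c ≤ a + b) (ha : α * a ≤ d) (hb : β * b ≤ d) : α * β / (α + β) * c ≤ d := by
  rw [div_mul_eq_mul_div, div_le_iff₀ (add_pos hα hβ)]
  nlinarith [mul_le_mul_of_nonneg_left hc (mul_pos hα hβ).le]

/-- Combining the two bounds yields an `αβ/(α+β)` fraction of the optimum. -/
theorem combine_bounds {V : Type*} [Fintype V] [DecidableEq V]
    (f : Finset V → ℝ) (hsub : Submodular f) (hnn : ∀ A : Finset V, 0 ≤ f A)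
    (OPT : Finset V) (α β : ℝ) (hα : 0 < α) (hβ : 0 < β)
    (p : V → ℝ) (hp0 : ∀ e, 0 ≤ p e) (hp1 : ∀ e, p e ≤ charVec OPT e)
    (ED : ℝ)
    (h1 : α * lovasz f (fun e => charVec OPT e - p e) ≤ ED)
    (h2 : β * lovasz f p ≤ ED) :
    α * β / (α + β) * f OPT ≤ ED :=
  mul_div_add_mul_le_of_le_add hα hβ (hsub.le_lovasz_add_lovasz hnn hp0 hp1) h1 h2
end

section
/- Let T₁ ∈ I satisfy f(T₁) ≥ α·f(T₁ ∪ OPT), T₂ satisfy f(T₂) ≥ α·f(T₂ ∪ (OPT ∖ T₁)), and T₃ satisfy f(T₃) ≥ (1/2)·f(T₁ ∩ OPT), and suppose f(T₁ ∪ OPT) + f(T₂ ∪ (OPT∖T₁)) + f(T₁ ∩ OPT) ≥ f(OPT). Then T = argmax{f(T₁), f(T₂), f(T₃)} satisfies f(T) ≥ (α/(2(1+α)))·f(OPT). -/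
open MeasureTheory Finset

theorem div_two_mul_one_add_mul_le_of_le_add_add {α a b c x M : ℝ} (hα : 0 < α)
    (ha : α * a ≤ M) (hb : α * b ≤ M) (hc : 1 / 2 * c ≤ M) (hx : x ≤ a + b + c) :
    α / (2 * (1 + α)) * x ≤ M := by
  have hαx : α * x ≤ 2 * (1 + α) * M :=
    calc α * x ≤ α * (a + b + c) := mul_le_mul_of_nonneg_left hx hα.le
      _ = α * a + α * b + 2 * α * (1 / 2 * c) := by ring
      _ ≤ M + M + 2 * α * M := by gcongr
      _ = 2 * (1 + α) * M := by ring
  rw [div_mul_eq_mul_div, div_le_iff₀ (by positivity)]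
  linarith

theorem best_of_three_general {V : Type*} [DecidableEq V]
    (f : Finset V → ℝ)
    (α : ℝ) (hα : 0 < α)
    (OPT T1 T2 T3 : Finset V)
    (h1 : α * f (T1 ∪ OPT) ≤ f T1)
    (h2 : α * f (T2 ∪ (OPT \ T1)) ≤ f T2)
    (h3 : (1 / 2 : ℝ) * f (T1 ∩ OPT) ≤ f T3)
    (hsum : f OPT ≤ f (T1 ∪ OPT) + f (T2 ∪ (OPT \ T1)) + f (T1 ∩ OPT)) :
    α / (2 * (1 + α)) * f OPT ≤ max (f T1) (max (f T2) (f T3)) :=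
  div_two_mul_one_add_mul_le_of_le_add_add hα (h1.trans (le_max_left _ _))
    (h2.trans ((le_max_left _ _).trans (le_max_right _ _)))
    (h3.trans ((le_max_right _ _).trans (le_max_right _ _))) hsum

/-- The best of `T₁, T₂, T₃` achieves an `α/(2(1+α))` fraction of `f(OPT)`. -/
theorem best_of_three {V : Type*} [DecidableEq V]
    (f : Finset V → ℝ) (hnn : ∀ A : Finset V, 0 ≤ f A)
    (α : ℝ) (hα : 0 < α) (hα1 : α ≤ 1)
    (OPT T1 T2 T3 : Finset V)
    (h1 : α * f (T1 ∪ OPT) ≤ f T1)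
    (h2 : α * f (T2 ∪ (OPT \ T1)) ≤ f T2)
    (h3 : (1 / 2 : ℝ) * f (T1 ∩ OPT) ≤ f T3)
    (hsum : f OPT ≤ f (T1 ∪ OPT) + f (T2 ∪ (OPT \ T1)) + f (T1 ∩ OPT)) :
    α / (2 * (1 + α)) * f OPT ≤ max (f T1) (max (f T2) (f T3)) :=
  best_of_three_general f α hα OPT T1 T2 T3 h1 h2 h3 hsum
end

section
/- Gupta et al.'s inequality: for a nonnegative submodular function f and sets T₁, T₂, OPT with T₂ ⊆ V ∖ T₁, we have f(T₁ ∪ OPT) + f(T₂ ∪ (OPT ∖ T₁)) + f(T₁ ∩ OPT) ≥ f(OPT). -/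
/-!
Split `OPT` into `OPT \ T1` and `T1 ∩ OPT`. Submodularity on this disjoint pair, with `f ∅ ≥ 0`,
bounds `f OPT` by `f (OPT \ T1) + f (T1 ∩ OPT)`. Since `T1` and `T2` are disjoint,
`OPT \ T1` is the intersection of `T1 ∪ OPT` and `T2 ∪ (OPT \ T1)`, so submodularity on that pair,
with nonnegativity of their union, bounds `f (OPT \ T1)` by `f (T1 ∪ OPT) + f (T2 ∪ (OPT \ T1))`.
-/

open MeasureTheory Finset

namespace Submodular

variable {V : Type*} [DecidableEq V] {f : Finset V → ℝ}

theorem union_le_add_of_disjoint (hf : Submodular f) (h0 : 0 ≤ f ∅) {A B : Finset V}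
    (hAB : Disjoint A B) : f (A ∪ B) ≤ f A + f B := by
  have := hf A B
  rw [disjoint_iff_inter_eq_empty.mp hAB] at this
  linarith

theorem inter_le_add (hf : Submodular f) {A B : Finset V} (hAB : 0 ≤ f (A ∪ B)) :
    f (A ∩ B) ≤ f A + f B := by
  linarith [hf A B]

end Submodular

theorem Finset.union_inter_union_sdiff_of_disjoint {V : Type*} [DecidableEq V]
    {S T U : Finset V} (hST : Disjoint S T) : (S ∪ U) ∩ (T ∪ (U \ S)) = U \ S := by
  ext x
  have : x ∈ S → x ∉ T := fun hS => Finset.disjoint_left.mp hST hS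
  simp only [mem_inter, mem_union, mem_sdiff]
  tauto

/-- Gupta et al.'s inequality for nonnegative submodular functions. -/
theorem gupta_inequality {V : Type*} [DecidableEq V]
    (f : Finset V → ℝ) (hsub : Submodular f) (hnn : ∀ A : Finset V, 0 ≤ f A)
    (T1 T2 OPT : Finset V) (hdisj : Disjoint T1 T2) :
    f OPT ≤ f (T1 ∪ OPT) + f (T2 ∪ (OPT \ T1)) + f (T1 ∩ OPT) := by
  have hsplit : f OPT ≤ f (OPT \ T1) + f (T1 ∩ OPT) := by
    have h := hsub.union_le_add_of_disjoint (hnn ∅) (disjoint_sdiff_inter OPT T1)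
    rwa [sdiff_union_inter, inter_comm] at h
  have hout : f (OPT \ T1) ≤ f (T1 ∪ OPT) + f (T2 ∪ (OPT \ T1)) := by
    have h := hsub.inter_le_add (hnn ((T1 ∪ OPT) ∪ (T2 ∪ (OPT \ T1))))
    rwa [union_inter_union_sdiff_of_disjoint hdisj] at h
  linarith
end
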